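/- arXiv:math/0108186 — 4 statements merged into one kernel-verified Lean document; each statement's English description precedes it below -/
import Mathlib

section
/- For the kernel K(z) = log|1 - z| + Re(z), there is a numerical constant C > 0 such that K(z) ≤ C·|z|²/(1 + |z|) for all z ∈ ℂ. -/
/-!
Since `‖1 - z‖² = 1 - 2 Re z + ‖z‖²`, the inequality `log x ≤ (x² - 1) / 2` gives
`log ‖1 - z‖ + Re z ≤ ‖z‖² / 2` away from `z = 1`, which is the right size for `‖z‖ < 1`.
For `‖z‖ ≥ 1` the crude bound `log ‖1 - z‖ + Re z ≤ ‖1 - z‖ + ‖z‖ ≤ 1 + 2 ‖z‖` suffices.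
-/

namespace Complex

lemma norm_one_sub_sq (z : ℂ) : ‖1 - z‖ ^ 2 = 1 - 2 * z.re + ‖z‖ ^ 2 := by
  rw [Complex.sq_norm, Complex.sq_norm, normSq_apply, normSq_apply]
  simp only [sub_re, one_re, sub_im, one_im]
  ring

lemma log_norm_one_sub_add_re_le_sq_div_two {z : ℂ} (hz : z ≠ 1) :
    Real.log ‖1 - z‖ + z.re ≤ ‖z‖ ^ 2 / 2 := by
  have hpos : 0 < ‖1 - z‖ ^ 2 := by
    have : 1 - z ≠ 0 := sub_ne_zero.mpr hz.symm
    positivity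
  have hlog := Real.log_le_sub_one_of_pos hpos
  rw [Real.log_pow, norm_one_sub_sq] at hlog
  push_cast at hlog
  linarith

lemma log_norm_one_sub_add_re_le_one_add_two_mul_norm (z : ℂ) :
    Real.log ‖1 - z‖ + z.re ≤ 1 + 2 * ‖z‖ := by
  have hlog : Real.log ‖1 - z‖ ≤ ‖1 - z‖ := Real.log_le_self (norm_nonneg _)
  have htri : ‖1 - z‖ ≤ 1 + ‖z‖ := by simpa using norm_sub_le (1 : ℂ) z
  linarith [re_le_norm z]

end Complex

/-- For the kernel `K(z) = log|1-z| + Re z` there is a numerical constant `C > 0`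
with `K(z) ≤ C·|z|²/(1+|z|)` for all `z ∈ ℂ`. -/
theorem stmt_1 : ∃ C : ℝ, 0 < C ∧ ∀ z : ℂ,
    Real.log (‖1 - z‖) + z.re ≤ C * ‖z‖ ^ 2 / (1 + ‖z‖) := by
  refine ⟨6, by norm_num, fun z => ?_⟩
  have hz : 0 ≤ ‖z‖ := norm_nonneg z
  rw [le_div_iff₀ (by positivity)]
  rcases lt_or_ge ‖z‖ 1 with hsmall | hlarge
  · have hz1 : z ≠ 1 := by rintro rfl; simp at hsmall
    have hK := Complex.log_norm_one_sub_add_re_le_sq_div_two hz1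
    nlinarith [mul_le_mul_of_nonneg_right hK (by positivity : (0 : ℝ) ≤ 1 + ‖z‖)]
  · have hK := Complex.log_norm_one_sub_add_re_le_one_add_two_mul_norm z
    nlinarith [mul_le_mul_of_nonneg_right hK (by positivity : (0 : ℝ) ≤ 1 + ‖z‖)]
end

section
/- Let g : ℝ → ℝ be bounded measurable with compact support, and let N_g be its signed distribution function: N_g(s) = meas{x : g(x) > s} for s > 0 and N_g(s) = -meas{x : g(x) < s} for s < 0. Then for every Borel function Φ : ℝ → ℝ with Φ(0) = 0 such that t ↦ Φ(g(t)) is integrable, ∫_ℝ Φ(g(t)) dt = ∫_ℝ Φ(s) dN_g(s), where the right-hand side is the Lebesgue–Stieltjes integral with respect to N_g. -/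
open MeasureTheory

/-- The signed distribution function of `g`. -/
noncomputable def Ng (g : ℝ → ℝ) (s : ℝ) : ℝ :=
  if 0 < s then (volume {x | s < g x}).toReal
  else if s < 0 then -(volume {x | g x < s}).toReal
  else 0

/-- The π-system of positive `Ioc`s, negative `Ico`s, and `{0}`. -/
def piSys : Set (Set ℝ) :=
  {s | s = {0} ∨ (∃ a b : ℝ, 0 < a ∧ a ≤ b ∧ s = Set.Ioc a b) ∨
    (∃ a b : ℝ, a ≤ b ∧ b < 0 ∧ s = Set.Ico a b)}

open Set in
lemma isPiSystem_piSys : IsPiSystem piSys := by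
  rintro s (rfl | ⟨a, b, ha, hab, rfl⟩ | ⟨a, b, hab, hb, rfl⟩)
    t (rfl | ⟨c, d, hc, hcd, rfl⟩ | ⟨c, d, hcd, hd, rfl⟩) hne
  · rw [Set.inter_self]; exact Or.inl rfl
  · obtain ⟨x, hx1, hx2⟩ := hne
    simp only [mem_singleton_iff] at hx1
    subst hx1
    exact absurd hx2.1 (by linarith)
  · obtain ⟨x, hx1, hx2⟩ := hne
    simp only [mem_singleton_iff] at hx1
    subst hx1
    exact absurd hx2.2 (by linarith)
  · obtain ⟨x, hx1, hx2⟩ := hne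
    simp only [mem_singleton_iff] at hx2
    subst hx2
    exact absurd hx1.1 (by linarith)
  · rw [Set.Ioc_inter_Ioc] at hne ⊢
    obtain ⟨x, hx⟩ := hne
    exact Or.inr (Or.inl ⟨_, _, lt_max_iff.mpr (Or.inl ha),
      le_of_lt (hx.1.trans_le hx.2), rfl⟩)
  · obtain ⟨x, hx1, hx2⟩ := hne
    exact absurd rfl (by have := hx1.1; have := hx2.2; intro _; linarith : ¬ (0:ℝ) = 0)
  · obtain ⟨x, hx1, hx2⟩ := hne
    simp only [mem_singleton_iff] at hx2
    subst hx2
    exact absurd hx1.2 (by linarith)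
  · obtain ⟨x, hx1, hx2⟩ := hne
    exact absurd rfl (by have := hx1.2; have := hx2.1; intro _; linarith : ¬ (0:ℝ) = 0)
  · rw [Set.Ico_inter_Ico] at hne ⊢
    obtain ⟨x, hx⟩ := hne
    exact Or.inr (Or.inr ⟨_, _, le_of_lt (hx.1.trans_lt hx.2),
      min_lt_iff.mpr (Or.inl hb), rfl⟩)

open Set MeasurableSpace in
lemma piSys_measurable_Ioc (a b : ℝ) (ha : 0 < a) :
    MeasurableSet[generateFrom piSys] (Ioc a b) := by
  rcases le_or_gt a b with h | h
  · exact measurableSet_generateFrom (Or.inr (Or.inl ⟨a, b, ha, h, rfl⟩))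
  · rw [Set.Ioc_eq_empty (not_lt.mpr h.le)]; exact @MeasurableSet.empty ℝ (MeasurableSpace.generateFrom piSys)

open Set MeasurableSpace in
lemma piSys_measurable_Ico (a b : ℝ) (hb : b < 0) :
    MeasurableSet[generateFrom piSys] (Ico a b) := by
  rcases le_or_gt a b with h | h
  · exact measurableSet_generateFrom (Or.inr (Or.inr ⟨a, b, h, hb, rfl⟩))
  · rw [Set.Ico_eq_empty (not_lt.mpr h.le)]; exact @MeasurableSet.empty ℝ (MeasurableSpace.generateFrom piSys)

open Set MeasurableSpace in
lemma piSys_measurable_IoiPos (c : ℝ) (hc : 0 < c) :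
    MeasurableSet[generateFrom piSys] (Ioi c) := by
  have h : Ioi c = ⋃ n : ℕ, Ioc c (c + n) := by
    ext x
    simp only [mem_Ioi, mem_iUnion, mem_Ioc]
    constructor
    · intro hx
      exact ⟨⌈x - c⌉₊, hx, by have := Nat.le_ceil (x - c); linarith⟩
    · rintro ⟨n, h1, _⟩; exact h1
  rw [h]
  exact .iUnion fun n => piSys_measurable_Ioc _ _ hc

open Set MeasurableSpace in
lemma piSys_measurable_Ioi0 :
    MeasurableSet[generateFrom piSys] (Ioi (0:ℝ)) := by
  have h : Ioi (0:ℝ) = ⋃ n : ℕ, Ioi (1/((n:ℝ)+1)) := by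
    ext x
    simp only [mem_Ioi, mem_iUnion]
    constructor
    · intro hx
      obtain ⟨n, hn⟩ := exists_nat_one_div_lt hx
      exact ⟨n, hn⟩
    · rintro ⟨n, hn⟩
      have : (0:ℝ) < 1/((n:ℝ)+1) := by positivity
      linarith
  rw [h]
  exact .iUnion fun n => piSys_measurable_IoiPos _ (by positivity)

open Set MeasurableSpace in
lemma piSys_measurable_IioNeg (c : ℝ) (hc : c < 0) :
    MeasurableSet[generateFrom piSys] (Iio c) := by
  have h : Iio c = ⋃ n : ℕ, Ico (c - ((n:ℝ)+1)) c := by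
    ext x
    simp only [mem_Iio, mem_iUnion, mem_Ico]
    constructor
    · intro hx
      exact ⟨⌈c - x⌉₊, by have := Nat.le_ceil (c - x); linarith, hx⟩
    · rintro ⟨n, _, h2⟩; exact h2
  rw [h]
  exact .iUnion fun n => piSys_measurable_Ico _ _ hc

open Set MeasurableSpace in
lemma piSys_measurable_IicNeg (c : ℝ) (hc : c < 0) :
    MeasurableSet[generateFrom piSys] (Iic c) := by
  have key : Iic c = ⋂ n : ℕ, Iio (c + (-c)/((n:ℝ)+2)) := by
    ext x
    simp only [mem_Iic, mem_iInter, mem_Iio]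
    constructor
    · intro hx n
      have h2 : (0:ℝ) < (-c)/((n:ℝ)+2) := div_pos (by linarith) (by positivity)
      linarith
    · intro hx
      by_contra h
      push_neg at h
      obtain ⟨n, hn⟩ := exists_nat_ge ((-c)/(x - c))
      have hxc : (0:ℝ) < x - c := by linarith
      have h1 : -c ≤ (x - c) * n := by
        rw [div_le_iff₀ hxc] at hn
        linarith
      have h2 : (-c)/((n:ℝ)+2) ≤ x - c := by
        rw [div_le_iff₀ (by positivity)]
        nlinarith [Nat.cast_nonneg (α := ℝ) n]
      have := hx n
      linarith
  rw [key]
  refine .iInter fun n => piSys_measurable_IioNeg _ ?_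
  have hn2 : (0:ℝ) < (n:ℝ) + 2 := by positivity
  have h1 : (-c)/((n:ℝ)+2) < -c := by
    rw [div_lt_iff₀ hn2]
    nlinarith [Nat.cast_nonneg (α := ℝ) n]
  linarith

open Set MeasurableSpace in
lemma measurableSpace_eq_generateFrom_piSys :
    (inferInstance : MeasurableSpace ℝ) = generateFrom piSys := by
  refine le_antisymm ?_ ?_
  · conv_lhs => rw [BorelSpace.measurable_eq (α := ℝ), borel_eq_generateFrom_Ioi]
    refine generateFrom_le ?_
    rintro _ ⟨c, rfl⟩
    rcases lt_trichotomy c 0 with hc | rfl | hc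
    · rw [← Set.compl_Iic]
      exact (piSys_measurable_IicNeg c hc).compl
    · exact piSys_measurable_Ioi0
    · exact piSys_measurable_IoiPos c hc
  · refine generateFrom_le ?_
    rintro s (rfl | ⟨a, b, _, _, rfl⟩ | ⟨a, b, _, _, rfl⟩)
    · exact measurableSet_singleton 0
    · exact measurableSet_Ioc
    · exact measurableSet_Ico

lemma cover_aux (x : ℝ) (hx : 0 < x) :
    ∃ k : ℕ, 1/((k:ℝ)+1) < x ∧ x ≤ (k:ℝ)+1 := by
  obtain ⟨m, hm⟩ := exists_nat_one_div_lt hx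
  refine ⟨m + ⌈x⌉₊, ?_, ?_⟩
  · have h1 : (m:ℝ)+1 ≤ (↑(m+⌈x⌉₊):ℝ)+1 := by
      push_cast
      linarith [Nat.cast_nonneg (α := ℝ) ⌈x⌉₊]
    calc 1/((↑(m+⌈x⌉₊):ℝ)+1) ≤ 1/((m:ℝ)+1) :=
          one_div_le_one_div_of_le (by positivity) h1
      _ < x := hm
  · have h2 := Nat.le_ceil x
    push_cast
    linarith [Nat.cast_nonneg (α := ℝ) m]

/-- For `g` bounded measurable with compact support and `Φ` Borel with `Φ(0) = 0` and
`Φ ∘ g` integrable, `∫ Φ(g(t)) dt = ∫ Φ(s) dN_g(s)`, where the Lebesgue–Stieltjes measure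
`ν` of `N_g` is characterized by `ν((a,b]) = N_g(a) - N_g(b)` for `0 < a ≤ b`,
`ν([a,b)) = N_g(a) - N_g(b)` for `a ≤ b < 0`, and `ν({0}) = 0`. -/
theorem stmt_5 (g : ℝ → ℝ) (M : ℝ) (hb : ∀ t, |g t| ≤ M) (hm : Measurable g)
    (hc : HasCompactSupport g) (ν : Measure ℝ)
    (hν0 : ν {0} = 0)
    (hpos : ∀ a b : ℝ, 0 < a → a ≤ b → ν (Set.Ioc a b) = ENNReal.ofReal (Ng g a - Ng g b))
    (hneg : ∀ a b : ℝ, a ≤ b → b < 0 → ν (Set.Ico a b) = ENNReal.ofReal (Ng g a - Ng g b))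
    (Φ : ℝ → ℝ) (hΦm : Measurable Φ) (hΦ0 : Φ 0 = 0)
    (hInt : Integrable (fun t => Φ (g t))) :
    ∫ t, Φ (g t) = ∫ s, Φ s ∂ν := by
  have hfin : volume (tsupport g) ≠ ⊤ := (IsCompact.measure_lt_top hc).ne
  have hposfin : ∀ a : ℝ, 0 < a → volume {x | a < g x} ≠ ⊤ := by
    intro a ha
    refine ne_top_of_le_ne_top hfin (measure_mono ?_)
    intro x hx
    exact subset_tsupport g (by simp only [Function.mem_support]
                                exact (ha.trans hx).ne')
  have hnegfin : ∀ b : ℝ, b < 0 → volume {x | g x < b} ≠ ⊤ := by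
    intro b hbn
    refine ne_top_of_le_ne_top hfin (measure_mono ?_)
    intro x hx
    exact subset_tsupport g (by simp only [Function.mem_support]
                                exact (hx.trans hbn).ne)
  have key_pos : ∀ a b : ℝ, 0 < a → a ≤ b →
      (volume.map g) (Set.Ioc a b) = ENNReal.ofReal (Ng g a - Ng g b) := by
    intro a b ha hab
    rw [Measure.map_apply hm measurableSet_Ioc]
    have hsub : {x | b < g x} ⊆ {x | a < g x} := fun x hx => lt_of_le_of_lt hab hx
    have hdiff : g ⁻¹' Set.Ioc a b = {x | a < g x} \ {x | b < g x} := by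
      ext x
      simp only [Set.mem_preimage, Set.mem_Ioc, Set.mem_diff, Set.mem_setOf_eq, not_lt]
    rw [hdiff, measure_diff hsub ((measurableSet_lt measurable_const hm).nullMeasurableSet)
      (hposfin b (ha.trans_le hab))]
    have hNab : Ng g a - Ng g b
        = (volume {x | a < g x}).toReal - (volume {x | b < g x}).toReal := by
      simp only [Ng, if_pos ha, if_pos (ha.trans_le hab)]
    rw [hNab, ← ENNReal.toReal_sub_of_le (measure_mono hsub) (hposfin a ha),
      ENNReal.ofReal_toReal (ne_top_of_le_ne_top (hposfin a ha) tsub_le_self)]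
  have key_neg : ∀ a b : ℝ, a ≤ b → b < 0 →
      (volume.map g) (Set.Ico a b) = ENNReal.ofReal (Ng g a - Ng g b) := by
    intro a b hab hbn
    rw [Measure.map_apply hm measurableSet_Ico]
    have hsub : {x | g x < a} ⊆ {x | g x < b} := fun x hx => lt_of_lt_of_le hx hab
    have hdiff : g ⁻¹' Set.Ico a b = {x | g x < b} \ {x | g x < a} := by
      ext x
      simp only [Set.mem_preimage, Set.mem_Ico, Set.mem_diff, Set.mem_setOf_eq, not_lt]
      tauto
    rw [hdiff, measure_diff hsub ((measurableSet_lt hm measurable_const).nullMeasurableSet)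
      (ne_top_of_le_ne_top (hnegfin b hbn) (measure_mono hsub))]
    have hNab : Ng g a - Ng g b
        = (volume {x | g x < b}).toReal - (volume {x | g x < a}).toReal := by
      simp only [Ng, if_neg (by linarith : ¬ (0:ℝ) < a), if_pos (lt_of_le_of_lt hab hbn),
        if_neg (by linarith : ¬ (0:ℝ) < b), if_pos hbn]
      ring
    rw [hNab, ← ENNReal.toReal_sub_of_le (measure_mono hsub) (hnegfin b hbn),
      ENNReal.ofReal_toReal (ne_top_of_le_ne_top (hnegfin b hbn) tsub_le_self)]
  -- the covering sequence
  set B : ℕ → Set ℝ := fun n =>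
    if n % 3 = 0 then {0}
    else if n % 3 = 1 then Set.Ioc (1/((n:ℝ)+1)) ((n:ℝ)+1)
    else Set.Ico (-((n:ℝ)+1)) (-(1/((n:ℝ)+1))) with hB
  have hBmem : ∀ n, B n ∈ piSys := by
    intro n
    have h1 : (0:ℝ) < 1/((n:ℝ)+1) := by positivity
    have h2 : (1:ℝ)/((n:ℝ)+1) ≤ (n:ℝ)+1 := by
      calc (1:ℝ)/((n:ℝ)+1) ≤ 1 := by
            rw [div_le_one (by positivity)]
            linarith [Nat.cast_nonneg (α := ℝ) n]
        _ ≤ (n:ℝ)+1 := by linarith [Nat.cast_nonneg (α := ℝ) n]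
    rw [hB]
    dsimp only
    split_ifs
    · exact Or.inl rfl
    · exact Or.inr (Or.inl ⟨_, _, h1, h2, rfl⟩)
    · exact Or.inr (Or.inr ⟨_, _, by linarith, by linarith, rfl⟩)
  have hBunion : ⋃ n, B n = Set.univ := by
    ext x
    simp only [Set.mem_iUnion, Set.mem_univ, iff_true]
    rcases lt_trichotomy x 0 with hx | rfl | hx
    · obtain ⟨k, h1, h2⟩ := cover_aux (-x) (by linarith)
      refine ⟨3*k+2, ?_⟩
      have hmod : (3*k+2) % 3 = 2 := by omega
      rw [hB]
      simp only [hmod]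
      simp only [if_neg (by norm_num : ¬(2:ℕ) = 0), if_neg (by norm_num : ¬(2:ℕ) = 1), Set.mem_Ico]
      have hcast : ((3*k+2 : ℕ):ℝ) + 1 = 3*(k:ℝ)+3 := by push_cast; ring
      rw [hcast]
      have hk : (k:ℝ)+1 ≤ 3*(k:ℝ)+3 := by linarith [Nat.cast_nonneg (α := ℝ) k]
      constructor
      · linarith
      · have : 1/(3*(k:ℝ)+3) ≤ 1/((k:ℝ)+1) :=
          one_div_le_one_div_of_le (by positivity) hk
        linarith
    · exact ⟨0, by rw [hB]; simp⟩
    · obtain ⟨k, h1, h2⟩ := cover_aux x hx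
      refine ⟨3*k+1, ?_⟩
      have hmod : (3*k+1) % 3 = 1 := by omega
      rw [hB]
      simp only [hmod]
      simp only [if_true, Set.mem_Ioc]
      have hcast : ((3*k+1 : ℕ):ℝ) + 1 = 3*(k:ℝ)+2 := by push_cast; ring
      rw [hcast]
      have hk : (k:ℝ)+1 ≤ 3*(k:ℝ)+2 := by linarith [Nat.cast_nonneg (α := ℝ) k]
      constructor
      · have : 1/(3*(k:ℝ)+2) ≤ 1/((k:ℝ)+1) :=
          one_div_le_one_div_of_le (by positivity) hk
        linarith
      · linarith
  have hBfin : ∀ n, ν (B n) ≠ ⊤ := by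
    intro n
    have h1 : (0:ℝ) < 1/((n:ℝ)+1) := by positivity
    have h2 : (1:ℝ)/((n:ℝ)+1) ≤ (n:ℝ)+1 := by
      calc (1:ℝ)/((n:ℝ)+1) ≤ 1 := by
            rw [div_le_one (by positivity)]
            linarith [Nat.cast_nonneg (α := ℝ) n]
        _ ≤ (n:ℝ)+1 := by linarith [Nat.cast_nonneg (α := ℝ) n]
    rw [hB]
    dsimp only
    split_ifs
    · rw [hν0]; exact ENNReal.zero_ne_top
    · rw [hpos _ _ h1 h2]; exact ENNReal.ofReal_ne_top
    · rw [hneg _ _ (by linarith) (by linarith)]; exact ENNReal.ofReal_ne_top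
  have h_eq : ∀ s ∈ piSys, ν s = ((volume.map g).restrict {0}ᶜ) s := by
    rintro s (rfl | ⟨a, b, ha, hab, rfl⟩ | ⟨a, b, hab, hbn, rfl⟩)
    · rw [hν0, Measure.restrict_apply (measurableSet_singleton 0)]
      simp
    · have hsub : Set.Ioc a b ⊆ ({0} : Set ℝ)ᶜ := fun x hx => (ha.trans hx.1).ne'
      rw [hpos a b ha hab, Measure.restrict_apply measurableSet_Ioc,
        Set.inter_eq_self_of_subset_left hsub, key_pos a b ha hab]
    · have hsub : Set.Ico a b ⊆ ({0} : Set ℝ)ᶜ := fun x hx => (hx.2.trans hbn).ne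
      rw [hneg a b hab hbn, Measure.restrict_apply measurableSet_Ico,
        Set.inter_eq_self_of_subset_left hsub, key_neg a b hab hbn]
  have hν_eq : ν = (volume.map g).restrict {0}ᶜ :=
    Measure.ext_of_generateFrom_of_iUnion piSys B
      measurableSpace_eq_generateFrom_piSys isPiSystem_piSys hBunion hBmem hBfin h_eq
  have hμint : Integrable Φ (volume.map g) :=
    (integrable_map_measure hΦm.aestronglyMeasurable hm.aemeasurable).mpr hInt
  calc ∫ t, Φ (g t) = ∫ s, Φ s ∂(volume.map g) :=
        (integral_map hm.aemeasurable hΦm.aestronglyMeasurable).symm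
    _ = (∫ s in ({0} : Set ℝ), Φ s ∂(volume.map g))
        + ∫ s in ({0} : Set ℝ)ᶜ, Φ s ∂(volume.map g) :=
          (integral_add_compl (measurableSet_singleton 0) hμint).symm
    _ = ∫ s in ({0} : Set ℝ)ᶜ, Φ s ∂(volume.map g) := by
          rw [setIntegral_eq_zero_of_forall_eq_zero
            (fun x hx => by rw [Set.eq_of_mem_singleton hx, hΦ0]), zero_add]
    _ = ∫ s, Φ s ∂ν := by rw [hν_eq]
end

section
/- Let u be continuous on the closed upper half-plane, harmonic in the open upper half-plane, satisfying u(z) = O(|z|²) as z → 0, u(z) = O(log|z|) as z → ∞, and ∫_ℝ |u(x)|/x² dx < ∞, with the Poisson representation u(iy) = (y/π)∫_ℝ u(x)/(x² + y²) dx for y > 0. Then ∫_ℝ u(x)/x² dx = 0. -/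
open MeasureTheory Filter Topology Asymptotics

/-!
Dividing the Poisson representation by `y` gives
`∫ u(x)/(x² + y²) dx = π · u(iy)/y` for `y > 0`. As `y → 0⁺` the left side tends to
`∫ u(x)/x² dx` by dominated convergence (`|u(x)|/x²` dominates), while the right side tends
to `0` because `u(iy) = O(y²)`.
-/

theorem tendsto_integral_div_sq_add_sq {f : ℝ → ℝ} (hf : Integrable (fun x => f x / x ^ 2)) :
    Tendsto (fun y => ∫ x, f x / (x ^ 2 + y ^ 2)) (𝓝 0) (𝓝 (∫ x, f x / x ^ 2)) := by
  refine tendsto_integral_filter_of_dominated_convergence (fun x => ‖f x / x ^ 2‖)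
    (Eventually.of_forall fun y => ?_) (Eventually.of_forall fun y => ?_) hf.norm ?_
  · have hfactor : (fun x => f x / x ^ 2 * (x ^ 2 / (x ^ 2 + y ^ 2))) =ᵐ[volume]
        fun x => f x / (x ^ 2 + y ^ 2) := by
      filter_upwards [volume.ae_ne 0] with x hx
      field_simp
    exact (hf.aestronglyMeasurable.mul (by fun_prop : Measurable
      fun x : ℝ => x ^ 2 / (x ^ 2 + y ^ 2)).aestronglyMeasurable).congr hfactor
  · filter_upwards [volume.ae_ne 0] with x hx
    rw [norm_div, norm_div, Real.norm_of_nonneg (by positivity : 0 ≤ x ^ 2 + y ^ 2),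
      Real.norm_of_nonneg (by positivity : 0 ≤ x ^ 2)]
    gcongr
    exact le_add_of_nonneg_right (sq_nonneg y)
  · filter_upwards [volume.ae_ne 0] with x hx
    have hcont : Continuous fun y : ℝ => f x / (x ^ 2 + y ^ 2) :=
      continuous_const.div (by fun_prop) fun y => by positivity
    simpa using hcont.tendsto 0

theorem tendsto_div_nhdsGT_zero_of_isBigO_sq {g : ℝ → ℝ} (hg : g =O[𝓝[>] 0] fun y => y ^ 2) :
    Tendsto (fun y => g y / y) (𝓝[>] 0) (𝓝 0) := by
  have hdiv : (fun y => g y / y) =O[𝓝[>] 0] fun y => y := by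
    refine (hg.mul (isBigO_refl (fun y : ℝ => y⁻¹) _)).congr'
      (Eventually.of_forall fun y => (div_eq_mul_inv _ _).symm) ?_
    filter_upwards [self_mem_nhdsWithin] with y (hy : 0 < y)
    rw [sq, mul_inv_cancel_right₀ hy.ne']
  exact hdiv.trans_tendsto (tendsto_id.mono_left nhdsWithin_le_nhds)

theorem stmt_7_general (u : ℂ → ℝ)
    (h0 : ∃ C δ : ℝ, 0 < δ ∧ ∀ z : ℂ, 0 ≤ z.im → ‖z‖ ≤ δ →
      |u z| ≤ C * ‖z‖ ^ 2)
    (hL1 : Integrable (fun x : ℝ => u x / x ^ 2))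
    (hPoisson : ∀ y : ℝ, 0 < y →
      u (Complex.I * y) = (y / Real.pi) * ∫ x : ℝ, u x / (x ^ 2 + y ^ 2)) :
    ∫ x : ℝ, u x / x ^ 2 = 0 := by
  obtain ⟨C, δ, hδ, hC⟩ := h0
  have hbigO : (fun y : ℝ => u (Complex.I * y)) =O[𝓝[>] 0] fun y => y ^ 2 := by
    refine IsBigO.of_bound C ?_
    filter_upwards [Ioc_mem_nhdsGT hδ] with y ⟨hy, hyδ⟩
    have hnorm : ‖Complex.I * y‖ = y := by simp [abs_of_pos hy]
    simpa [hnorm, abs_of_pos hy] using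
      hC (Complex.I * y) (by simpa using hy.le) (hnorm.trans_le hyδ)
  have hlim : Tendsto (fun y => ∫ x : ℝ, u x / (x ^ 2 + y ^ 2)) (𝓝[>] 0)
      (𝓝 (∫ x : ℝ, u x / x ^ 2)) :=
    (tendsto_integral_div_sq_add_sq hL1).mono_left nhdsWithin_le_nhds
  have hlim_zero : Tendsto (fun y => ∫ x : ℝ, u x / (x ^ 2 + y ^ 2)) (𝓝[>] 0) (𝓝 0) := by
    have hpoisson_lim := (tendsto_div_nhdsGT_zero_of_isBigO_sq hbigO).const_mul Real.pi
    rw [mul_zero] at hpoisson_lim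
    refine hpoisson_lim.congr' ?_
    filter_upwards [self_mem_nhdsWithin] with y (hy : 0 < y)
    rw [hPoisson y hy]
    field_simp
  exact tendsto_nhds_unique hlim hlim_zero

/-- Let `u` be continuous on the closed upper half-plane, harmonic in the open upper
half-plane (i.e. the real part of a holomorphic function there), `u(z) = O(|z|²)` at `0`,
`u(z) = O(log|z|)` at `∞`, `∫ |u(x)|/x² dx < ∞`, satisfying the Poisson representation
`u(iy) = (y/π)∫ u(x)/(x²+y²) dx`.  Then `∫ u(x)/x² dx = 0`. -/
theorem stmt_7 (u : ℂ → ℝ)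
    (hcont : ContinuousOn u {z : ℂ | 0 ≤ z.im})
    (hharm : ∃ F : ℂ → ℂ, DifferentiableOn ℂ F {z : ℂ | 0 < z.im} ∧
      ∀ z ∈ {z : ℂ | 0 < z.im}, u z = (F z).re)
    (h0 : ∃ C δ : ℝ, 0 < δ ∧ ∀ z : ℂ, 0 ≤ z.im → ‖z‖ ≤ δ →
      |u z| ≤ C * ‖z‖ ^ 2)
    (hinf : ∃ C R : ℝ, 0 < R ∧ ∀ z : ℂ, 0 ≤ z.im → R ≤ ‖z‖ →
      |u z| ≤ C * Real.log (‖z‖))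
    (hL1 : Integrable (fun x : ℝ => u x / x ^ 2))
    (hPoisson : ∀ y : ℝ, 0 < y →
      u (Complex.I * y) = (y / Real.pi) * ∫ x : ℝ, u x / (x ^ 2 + y ^ 2)) :
    ∫ x : ℝ, u x / x ^ 2 = 0 :=
  stmt_7_general u h0 hL1 hPoisson
end

section
/- Let g : ℝ → ℝ be bounded measurable with compact support, ∫ g = 0, Hg ∈ L¹(ℝ), and define u₁(z) = ∫_ℝ log|(1 - z g(t))/(1 - z(g(t) + i|Hg(t)|))| dt. Then -lim_{y→0⁺} u₁(iy)/y = ∫_ℝ |Hg(t)| dt; that is, lim_{y→0⁺} (1/y) ∫_ℝ log| (1 - i y g(t)) / (1 - i y g(t) + y|Hg(t)|) | dt = -∫_ℝ |Hg(t)| dt. -/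
/-!
With `a = g t` and `b = |Hg t|`, the integrand at `z = iy` is
`φ(y) = (log (1 + (ya)²) - log ((1 + yb)² + (ya)²)) / 2`, which satisfies `-yb ≤ φ(y) ≤ 0` and
`φ'(0) = -b`. Hence `φ(y) / y` is dominated by `|Hg| ∈ L¹` and tends to `-|Hg t|` pointwise, and
dominated convergence gives the limit.
-/

open MeasureTheory

/-- `H` is the (principal value) Hilbert transform of `h`, almost everywhere. -/
def IsPV (h H : ℝ → ℝ) : Prop :=
  ∀ᵐ ξ : ℝ ∂volume, Filter.Tendsto
    (fun ε : ℝ => (1 / Real.pi) * ∫ t in {t : ℝ | ε < |t - ξ|}, h t / (t - ξ))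
    (nhdsWithin 0 (Set.Ioi 0)) (nhds (H ξ))

open Filter Topology

noncomputable def logNormRatio (a b y : ℝ) : ℝ :=
  (Real.log (1 + (y * a) ^ 2) - Real.log ((1 + y * b) ^ 2 + (y * a) ^ 2)) / 2

lemma log_norm_div_eq_logNormRatio (a b y : ℝ) (hyb : 0 ≤ y * b) :
    Real.log ‖(1 - Complex.I * y * a) / (1 - Complex.I * y * a + (y * b : ℝ))‖ =
      logNormRatio a b y := by
  have hnum : ‖1 - Complex.I * y * a‖ = √(1 + (y * a) ^ 2) := by
    simp [Complex.norm_def, Complex.normSq_apply, sq]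
  have hden : ‖1 - Complex.I * y * a + (y * b : ℝ)‖ = √((1 + y * b) ^ 2 + (y * a) ^ 2) := by
    simp [Complex.norm_def, Complex.normSq_apply, sq]
  rw [norm_div, hnum, hden, Real.log_div (by positivity) (by positivity),
    Real.log_sqrt (by positivity), Real.log_sqrt (by positivity), logNormRatio, sub_div]

lemma abs_logNormRatio_le (a b y : ℝ) (hyb : 0 ≤ y * b) : |logNormRatio a b y| ≤ y * b := by
  have hnonpos : logNormRatio a b y ≤ 0 := by
    have : Real.log (1 + (y * a) ^ 2) ≤ Real.log ((1 + y * b) ^ 2 + (y * a) ^ 2) :=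
      Real.log_le_log (by positivity) (by nlinarith)
    rw [logNormRatio]
    linarith
  have hlower : -(y * b) ≤ logNormRatio a b y := by
    have hle : Real.log ((1 + y * b) ^ 2 + (y * a) ^ 2) ≤
        Real.log ((1 + y * b) ^ 2 * (1 + (y * a) ^ 2)) :=
      Real.log_le_log (by positivity) (by nlinarith [sq_nonneg (y * a), sq_nonneg (y * b)])
    rw [Real.log_mul (by positivity) (by positivity), Real.log_pow] at hle
    have := Real.log_le_sub_one_of_pos (by positivity : 0 < 1 + y * b)
    rw [logNormRatio]
    push_cast at hle
    linarith
  exact abs_le.mpr ⟨hlower, hnonpos.trans hyb⟩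

lemma hasDerivAt_logNormRatio (a b : ℝ) : HasDerivAt (logNormRatio a b) (-b) 0 := by
  have hnum : HasDerivAt (fun y : ℝ => 1 + (y * a) ^ 2) 0 0 := by
    simpa using (((hasDerivAt_id (0 : ℝ)).mul_const a).fun_pow 2).const_add 1
  have hden : HasDerivAt (fun y : ℝ => (1 + y * b) ^ 2 + (y * a) ^ 2) (2 * b) 0 := by
    simpa using ((((hasDerivAt_id (0 : ℝ)).mul_const b).const_add 1).fun_pow 2).fun_add
      (((hasDerivAt_id (0 : ℝ)).mul_const a).fun_pow 2)
  exact (((hnum.log (by simp)).fun_sub (hden.log (by simp))).div_const 2).congr_deriv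
    (by norm_num; ring)

lemma tendsto_logNormRatio_div (a b : ℝ) :
    Tendsto (fun y => y⁻¹ * logNormRatio a b y) (𝓝[>] 0) (𝓝 (-b)) := by
  simpa [logNormRatio] using (hasDerivAt_logNormRatio a b).tendsto_slope_zero_right

theorem stmt_9_general (g : ℝ → ℝ) (hm : Measurable g) (Hg : ℝ → ℝ) (hint : Integrable Hg) :
    Filter.Tendsto
      (fun y : ℝ => (1 / y) * ∫ t, Real.log ‖
        ((1 - Complex.I * y * (g t : ℂ)) /
          (1 - Complex.I * y * (g t : ℂ) + (y * |Hg t| : ℝ)))‖)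
      (nhdsWithin 0 (Set.Ioi 0))
      (nhds (-∫ t, |Hg t|)) := by
  have hpos : ∀ᶠ y in 𝓝[>] (0 : ℝ), 0 < y := self_mem_nhdsWithin
  have hrepr : ∀ᶠ y in 𝓝[>] (0 : ℝ), (1 / y) * ∫ t, Real.log ‖
        ((1 - Complex.I * y * (g t : ℂ)) /
          (1 - Complex.I * y * (g t : ℂ) + (y * |Hg t| : ℝ)))‖ =
        ∫ t, y⁻¹ * logNormRatio (g t) |Hg t| y := by
    filter_upwards [hpos] with y hy
    rw [one_div, ← integral_const_mul]
    simp_rw [log_norm_div_eq_logNormRatio _ _ _ (mul_nonneg hy.le (abs_nonneg _))]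
  refine Tendsto.congr' (EventuallyEq.symm hrepr) ?_
  rw [← integral_neg]
  refine tendsto_integral_filter_of_dominated_convergence (fun t => |Hg t|) ?_ ?_ hint.abs
    (ae_of_all _ fun t => tendsto_logNormRatio_div _ _)
  · refine Eventually.of_forall fun y => ?_
    have hHg := hint.aemeasurable
    unfold logNormRatio
    exact AEMeasurable.aestronglyMeasurable (by fun_prop)
  · filter_upwards [hpos] with y hy
    refine ae_of_all _ fun t => ?_
    rw [norm_mul, norm_inv, Real.norm_of_nonneg hy.le, inv_mul_le_iff₀ hy]
    exact abs_logNormRatio_le _ _ _ (mul_nonneg hy.le (abs_nonneg _))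

/-- For `g` bounded measurable with compact support, `∫ g = 0`, `Hg ∈ L¹` its Hilbert
transform, and `u₁(z) = ∫ log|(1-z g)/(1-z(g+i|Hg|))| dt`:
`lim_{y→0⁺} u₁(iy)/y = -∫ |Hg|`. -/
theorem stmt_9 (g : ℝ → ℝ) (M : ℝ) (hb : ∀ t, |g t| ≤ M) (hm : Measurable g)
    (hc : HasCompactSupport g) (h0 : ∫ t, g t = 0) (Hg : ℝ → ℝ) (hHm : Measurable Hg)
    (hpv : IsPV g Hg) (hint : Integrable Hg) :
    Filter.Tendsto
      (fun y : ℝ => (1 / y) * ∫ t, Real.log ‖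
        ((1 - Complex.I * y * (g t : ℂ)) /
          (1 - Complex.I * y * (g t : ℂ) + (y * |Hg t| : ℝ)))‖)
      (nhdsWithin 0 (Set.Ioi 0))
      (nhds (-∫ t, |Hg t|)) :=
  stmt_9_general g hm Hg hint
end
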